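/- arXiv:0909.3697 — 5 statements merged into one kernel-verified Lean document; each statement's English description precedes it below -/
import Mathlib

section
/- For every integer n ≥ 1 and every real number C with C > 0 and C > (n−4)²/16, the inequality ∑_{j=0}^{n} √(C+j) > (n+1)·√(C + n/2 − 1) holds. -/
theorem sum_sqrt_gt (n : ℕ) (hn : 1 ≤ n) (C : ℝ) (hC : 0 < C)
    (hC' : C > ((n : ℝ) - 4) ^ 2 / 16) :
    ∑ j ∈ Finset.range (n + 1), Real.sqrt (C + (j : ℝ)) >
      ((n : ℝ) + 1) * Real.sqrt (C + (n : ℝ) / 2 - 1) := by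
  have hn1 : (1 : ℝ) ≤ (n : ℝ) := by exact_mod_cast hn
  set a : ℝ := C + (n : ℝ) / 2 - 1 with ha
  have ha0 : 0 < a := by rw [ha]; nlinarith [sq_nonneg ((n : ℝ) - 1)]
  -- pair inequality
  have key : ∀ j ∈ Finset.range (n + 1),
      2 * Real.sqrt a < Real.sqrt (C + (j : ℝ)) + Real.sqrt (C + ((n - j : ℕ) : ℝ)) := by
    intro j hj
    have hjn : j ≤ n := Nat.lt_succ_iff.mp (Finset.mem_range.mp hj)
    have hcast : ((n - j : ℕ) : ℝ) = (n : ℝ) - (j : ℝ) := Nat.cast_sub hjn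
    rw [hcast]
    have hjr : (0 : ℝ) ≤ (j : ℝ) := Nat.cast_nonneg j
    have hjnr : (j : ℝ) ≤ (n : ℝ) := by exact_mod_cast hjn
    set x : ℝ := C + (j : ℝ) with hx
    set y : ℝ := C + ((n : ℝ) - (j : ℝ)) with hy
    have hx0 : 0 < x := by nlinarith
    have hy0 : 0 < y := by nlinarith
    have hxy : (C + (n : ℝ) / 2 - 2) ^ 2 < x * y := by
      nlinarith [mul_nonneg hjr (sub_nonneg.mpr hjnr)]
    have hsqrt : C + (n : ℝ) / 2 - 2 < Real.sqrt (x * y) := by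
      rcases le_or_gt (C + (n : ℝ) / 2 - 2) 0 with h | h
      · exact lt_of_le_of_lt h (Real.sqrt_pos.mpr (mul_pos hx0 hy0))
      · exact (Real.lt_sqrt h.le).mpr hxy
    have hmul : Real.sqrt (x * y) = Real.sqrt x * Real.sqrt y := Real.sqrt_mul hx0.le y
    have ex : Real.sqrt x ^ 2 = x := Real.sq_sqrt hx0.le
    have ey : Real.sqrt y ^ 2 = y := Real.sq_sqrt hy0.le
    have ea : Real.sqrt a ^ 2 = a := Real.sq_sqrt ha0.le
    have hsq : (2 * Real.sqrt a) ^ 2 < (Real.sqrt x + Real.sqrt y) ^ 2 := by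
      have e1 : (2 * Real.sqrt a) ^ 2 = 4 * a := by rw [mul_pow, ea]; ring
      have e2 : (Real.sqrt x + Real.sqrt y) ^ 2
          = x + 2 * (Real.sqrt x * Real.sqrt y) + y := by rw [add_sq, ex, ey]; ring
      rw [hmul] at hsqrt
      rw [e1, e2, hx, hy, ha]
      linarith
    have := lt_of_pow_lt_pow_left₀ 2 (by positivity : (0:ℝ) ≤ Real.sqrt x + Real.sqrt y) hsq
    exact this
  have hrefl : ∑ j ∈ Finset.range (n + 1), Real.sqrt (C + ((n - j : ℕ) : ℝ)) =
      ∑ j ∈ Finset.range (n + 1), Real.sqrt (C + (j : ℝ)) := by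
    simpa using Finset.sum_range_reflect (fun j => Real.sqrt (C + (j : ℝ))) (n + 1)
  have hsum : ∑ j ∈ Finset.range (n + 1), (2 * Real.sqrt a) <
      ∑ j ∈ Finset.range (n + 1),
        (Real.sqrt (C + (j : ℝ)) + Real.sqrt (C + ((n - j : ℕ) : ℝ))) :=
    Finset.sum_lt_sum_of_nonempty (Finset.nonempty_range_add_one) key
  rw [Finset.sum_add_distrib, hrefl, Finset.sum_const, Finset.card_range] at hsum
  have hcard : ((n + 1 : ℕ) : ℝ) = (n : ℝ) + 1 := by push_cast; ring
  rw [nsmul_eq_mul, hcard] at hsum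
  linarith
end

section
/- Let n ≥ 2 be an integer, ω > 0 a real number, and suppose the coupling strength c satisfies 0 < c < 2(2n−3)ω² / ((n−1)(n²−3n+4)). Then β_j > 0 for every j = 1, …, n. -/
lemma sum_Icc_sub_one (n : ℕ) :
    ∑ k ∈ Finset.Icc 1 n, ((k : ℝ) - 1) = (n : ℝ) * ((n : ℝ) - 1) / 2 := by
  induction n with
  | zero => simp
  | succ m ih =>
      rw [Finset.sum_Icc_succ_top (by omega : 1 ≤ m + 1), ih]
      push_cast
      ring

set_option maxHeartbeats 800000 in
theorem krawtchouk_beta_pos (n : ℕ) (hn : 2 ≤ n) (ω c : ℝ) (hω : 0 < ω) (hc : 0 < c)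
    (hcu : c < 2 * (2 * (n : ℝ) - 3) * ω ^ 2 /
        (((n : ℝ) - 1) * ((n : ℝ) ^ 2 - 3 * (n : ℝ) + 4))) :
    ∀ j ∈ Finset.Icc 1 n,
      0 < -Real.sqrt (ω ^ 2 + c * ((j : ℝ) - 1)) +
          (1 / ((n : ℝ) - 1)) *
            ∑ k ∈ Finset.Icc 1 n, Real.sqrt (ω ^ 2 + c * ((k : ℝ) - 1)) := by
  intro j hj
  rw [Finset.mem_Icc] at hj
  set N : ℝ := (n : ℝ) with hN
  have hN2 : (2:ℝ) ≤ N := by rw [hN]; exact_mod_cast hn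
  have hN1 : (0:ℝ) < N - 1 := by linarith
  set s : ℝ := Real.sqrt (ω ^ 2 + c * (N - 1)) with hs
  have hμn : (0:ℝ) ≤ ω ^ 2 + c * (N - 1) := by nlinarith
  have hssq : s ^ 2 = ω ^ 2 + c * (N - 1) := Real.sq_sqrt hμn
  have hs0 : 0 ≤ s := Real.sqrt_nonneg _
  have hsω : ω ≤ s := by
    have h1 : Real.sqrt (ω ^ 2) ≤ s := Real.sqrt_le_sqrt (by nlinarith)
    rwa [Real.sqrt_sq hω.le] at h1
  -- key bound from hypothesis : c * (N-2)^2 < 4 * ω^2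
  have hden : (0:ℝ) < (N - 1) * (N ^ 2 - 3 * N + 4) := by
    have h4 : (0:ℝ) < N ^ 2 - 3 * N + 4 := by nlinarith [sq_nonneg (2 * N - 3)]
    exact mul_pos hN1 h4
  have hc1 : c * ((N - 1) * (N ^ 2 - 3 * N + 4)) < 2 * (2 * N - 3) * ω ^ 2 := by
    have := (lt_div_iff₀ hden).mp hcu
    linarith
  have hckey : c * (N - 2) ^ 2 < 4 * ω ^ 2 := by
    nlinarith [sq_nonneg (N - 2), sq_nonneg ω, mul_pos hc hN1,
      mul_nonneg hc.le (sq_nonneg (N - 2)), sq_nonneg (N - 3)]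
  -- (N-2) * s < N * ω
  have hkey : (N - 2) * s < N * ω := by
    have hsq : ((N - 2) * s) ^ 2 < (N * ω) ^ 2 := by
      have h1 : ((N - 2) * s) ^ 2 = (N - 2) ^ 2 * (ω ^ 2 + c * (N - 1)) := by
        rw [mul_pow, hssq]
      have h2 : (N - 2) ^ 2 * (c * (N - 1)) < 4 * ω ^ 2 * (N - 1) := by
        rcases eq_or_lt_of_le hN2 with h | h
        · rw [← h]; norm_num; nlinarith
        · have : (0:ℝ) < (N - 2) ^ 2 := by nlinarith
          nlinarith
      nlinarith
    have hb : 0 ≤ N * ω := by positivity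
    exact lt_of_pow_lt_pow_left₀ 2 hb hsq
  -- chord bound
  have chord : ∀ x : ℝ, 0 ≤ x → x ≤ N - 1 →
      ω + x * (s - ω) / (N - 1) ≤ Real.sqrt (ω ^ 2 + c * x) := by
    intro x hx0 hx1
    set t : ℝ := x * (s - ω) / (N - 1) with ht
    have ht0 : 0 ≤ t := by
      apply div_nonneg _ hN1.le
      exact mul_nonneg hx0 (by linarith)
    have hts : t ≤ s - ω := by
      rw [ht, div_le_iff₀ hN1]
      nlinarith
    have hsq : (ω + t) ^ 2 ≤ ω ^ 2 + c * x := by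
      have hct : t * (N - 1) = x * (s - ω) := by
        rw [ht]; field_simp
      have e1 : t * (ω + s) = c * x := by
        have h' : t * (ω + s) * (N - 1) = c * x * (N - 1) := by
          calc t * (ω + s) * (N - 1) = t * (N - 1) * (ω + s) := by ring
            _ = x * (s - ω) * (ω + s) := by rw [hct]
            _ = c * x * (N - 1) := by linear_combination x * hssq
        exact mul_right_cancel₀ hN1.ne' h'
      have e2 : t * (2 * ω + t) ≤ t * (ω + s) :=
        mul_le_mul_of_nonneg_left (by linarith) ht0
      nlinarith [e1, e2]
    calc ω + t = Real.sqrt ((ω + t) ^ 2) := by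
          rw [Real.sqrt_sq (by positivity)]
      _ ≤ Real.sqrt (ω ^ 2 + c * x) := Real.sqrt_le_sqrt hsq
  -- lower bound for the sum
  have hsum : N * ω + N * (s - ω) / 2 ≤
      ∑ k ∈ Finset.Icc 1 n, Real.sqrt (ω ^ 2 + c * ((k : ℝ) - 1)) := by
    have h1 : ∑ k ∈ Finset.Icc 1 n, (ω + ((k : ℝ) - 1) * (s - ω) / (N - 1)) ≤
        ∑ k ∈ Finset.Icc 1 n, Real.sqrt (ω ^ 2 + c * ((k : ℝ) - 1)) := by
      apply Finset.sum_le_sum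
      intro k hk
      rw [Finset.mem_Icc] at hk
      apply chord
      · have : (1:ℝ) ≤ (k:ℝ) := by exact_mod_cast hk.1
        linarith
      · have : (k:ℝ) ≤ N := by rw [hN]; exact_mod_cast hk.2
        linarith
    have h2 : ∑ k ∈ Finset.Icc 1 n, (ω + ((k : ℝ) - 1) * (s - ω) / (N - 1)) =
        N * ω + N * (s - ω) / 2 := by
      have hcard : (Finset.Icc 1 n).card = n := by rw [Nat.card_Icc]; omega
      have h3 : ∑ k ∈ Finset.Icc 1 n, ((k : ℝ) - 1) * (s - ω) / (N - 1) =
          (∑ k ∈ Finset.Icc 1 n, ((k : ℝ) - 1)) * ((s - ω) / (N - 1)) := by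
        rw [Finset.sum_mul]
        apply Finset.sum_congr rfl
        intro k _
        ring
      rw [Finset.sum_add_distrib, Finset.sum_const, hcard, nsmul_eq_mul, h3,
        sum_Icc_sub_one, ← hN]
      field_simp
    linarith
  -- compare with s and μ_j
  have hmain : (N - 1) * s < ∑ k ∈ Finset.Icc 1 n, Real.sqrt (ω ^ 2 + c * ((k : ℝ) - 1)) := by
    have : (N - 1) * s < N * ω + N * (s - ω) / 2 := by nlinarith
    linarith
  have hμj : Real.sqrt (ω ^ 2 + c * ((j : ℝ) - 1)) ≤ s := by
    apply Real.sqrt_le_sqrt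
    have : (j:ℝ) ≤ N := by rw [hN]; exact_mod_cast hj.2
    nlinarith
  have hfin : (N - 1) * Real.sqrt (ω ^ 2 + c * ((j : ℝ) - 1)) <
      ∑ k ∈ Finset.Icc 1 n, Real.sqrt (ω ^ 2 + c * ((k : ℝ) - 1)) := by
    calc (N - 1) * Real.sqrt (ω ^ 2 + c * ((j : ℝ) - 1)) ≤ (N - 1) * s :=
          mul_le_mul_of_nonneg_left hμj hN1.le
      _ < _ := hmain
  have := mul_lt_mul_of_pos_left hfin (show (0:ℝ) < 1 / (N - 1) by positivity)
  rw [← mul_assoc, one_div_mul_cancel hN1.ne', one_mul] at this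
  linarith
end

section
/- Let n ≥ 2 be an integer and x a real number with x ≥ (n−1)(n²−3n+4) / (2(2n−3)). Then (n−1)·√(x + n/2 − 2) + √(x + n − 1) ≥ (n−1)·√(x + n − 1). -/
theorem sqrt_ineq_for_beta_n (n : ℕ) (hn : 2 ≤ n) (x : ℝ)
    (hx : x ≥ ((n : ℝ) - 1) * ((n : ℝ) ^ 2 - 3 * (n : ℝ) + 4) / (2 * (2 * (n : ℝ) - 3))) :
    ((n : ℝ) - 1) * Real.sqrt (x + (n : ℝ) / 2 - 2) + Real.sqrt (x + (n : ℝ) - 1) ≥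
      ((n : ℝ) - 1) * Real.sqrt (x + (n : ℝ) - 1) := by
  set c := (n : ℝ) with hcdef
  have hc : (2:ℝ) ≤ c := by rw [hcdef]; exact_mod_cast hn
  have hd : (0:ℝ) < 2 * (2 * c - 3) := by linarith
  have hx' : (c - 1) * (c ^ 2 - 3 * c + 4) ≤ x * (2 * (2 * c - 3)) :=
    (div_le_iff₀ hd).mp hx
  have hB : 0 ≤ x + c / 2 - 2 := by nlinarith [sq_nonneg (c - 2), sq_nonneg (c - 3)]
  have hA : 0 ≤ x + c - 1 := by linarith
  have key : (c - 2) ^ 2 * (x + c - 1) ≤ (c - 1) ^ 2 * (x + c / 2 - 2) := by nlinarith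
  have h2 : (c - 2) * Real.sqrt (x + c - 1) ≤ (c - 1) * Real.sqrt (x + c / 2 - 2) := by
    have h := Real.sqrt_le_sqrt key
    rwa [Real.sqrt_mul (sq_nonneg _), Real.sqrt_mul (sq_nonneg _),
      Real.sqrt_sq (by linarith), Real.sqrt_sq (by linarith)] at h
  nlinarith [h2, Real.sqrt_nonneg (x + c - 1)]
end

section
/- Let R be an associative unital ℝ-algebra containing elements e_{00}, e_{jj}, e_{0j}, e_{j0} (j = 1,…,n, with n ≥ 2) satisfying the gl(1|n) relations {e_{0j}, e_{j0}} = e_{00} + e_{jj}, {e_{0j}, e_{0k}} = 0, {e_{j0}, e_{k0}} = 0, with {e_{0j}, e_{k0}} commuting with e_{0l} and e_{l0} as dictated by [e_{00}, e_{0k}] = e_{0k}, [e_{00}, e_{k0}] = −e_{k0}, [e_{jj}, e_{0k}] = −δ_{jk}·e_{0k}, [e_{jj}, e_{k0}] = δ_{jk}·e_{k0}. Let μ_1,…,μ_n > 0 be reals, set β_j = −√μ_j + (1/(n−1))·∑_{k=1}^{n} √μ_k, assume β_j ≠ 0 for all j, set β = ∑_{k=1}^{n} β_k, and define a_j^{−}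 = √(2|β_j|/√μ_j)·e_{j0} and a_j^{+} = sign(β_j)·√(2|β_j|/√μ_j)·e_{0j}. Then (i) ∑_{j=1}^{n} (√μ_j/2)·{a_j^{+}, a_j^{−}} = β·e_{00} + ∑_{j=1}^{n} β_j·e_{jj}, and (ii) for every k: ∑_{j=1}^{n} [ √μ_j·{a_j^{+}, a_j^{−}}, a_k^{±} ] = ±2√μ_k·a_k^{±}. -/
theorem gl1n_solution (R : Type*) [Ring R] [Algebra ℝ R] (n : ℕ) (hn : 2 ≤ n)
    (e00 : R) (ed eu el : Fin n → R)
    -- gl(1|n) relations: `ed j` is `e_{jj}`, `eu j` is `e_{0j}`, `el j` is `e_{j0}`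
    (h1 : ∀ j, eu j * el j + el j * eu j = e00 + ed j)
    (h2 : ∀ j k, eu j * eu k + eu k * eu j = 0)
    (h3 : ∀ j k, el j * el k + el k * el j = 0)
    (h4 : ∀ k, e00 * eu k - eu k * e00 = eu k)
    (h5 : ∀ k, e00 * el k - el k * e00 = -el k)
    (h6 : ∀ j k, ed j * eu k - eu k * ed j = -(if j = k then eu k else 0))
    (h7 : ∀ j k, ed j * el k - el k * ed j = (if j = k then el k else 0))
    (μ : Fin n → ℝ) (hμ : ∀ j, 0 < μ j)
    (β : Fin n → ℝ)
    (hβ : ∀ j, β j = -Real.sqrt (μ j) + (1 / ((n : ℝ) - 1)) * ∑ k, Real.sqrt (μ k))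
    (hβ0 : ∀ j, β j ≠ 0)
    (B : ℝ) (hB : B = ∑ k, β k)
    (ap am : Fin n → R)
    (ham : ∀ j, am j = Real.sqrt (2 * |β j| / Real.sqrt (μ j)) • el j)
    (hap : ∀ j, ap j = (Real.sign (β j) * Real.sqrt (2 * |β j| / Real.sqrt (μ j))) • eu j) :
    (∑ j, (Real.sqrt (μ j) / 2) • (ap j * am j + am j * ap j) =
        B • e00 + ∑ j, β j • ed j) ∧
      (∀ k : Fin n,
        (∑ j, ((Real.sqrt (μ j) • (ap j * am j + am j * ap j)) * ap k -
            ap k * (Real.sqrt (μ j) • (ap j * am j + am j * ap j))) =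
          (2 * Real.sqrt (μ k)) • ap k) ∧
        (∑ j, ((Real.sqrt (μ j) • (ap j * am j + am j * ap j)) * am k -
            am k * (Real.sqrt (μ j) • (ap j * am j + am j * ap j))) =
          (-(2 * Real.sqrt (μ k))) • am k)) := by
  have hsq : ∀ j, (0:ℝ) < Real.sqrt (μ j) := fun j => Real.sqrt_pos.mpr (hμ j)
  have key : ∀ j, Real.sqrt (μ j) • (ap j * am j + am j * ap j)
      = (2 * β j) • (e00 + ed j) := by
    intro j
    have hc : Real.sqrt (2 * |β j| / Real.sqrt (μ j)) *
        Real.sqrt (2 * |β j| / Real.sqrt (μ j)) = 2 * |β j| / Real.sqrt (μ j) :=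
      Real.mul_self_sqrt (by positivity)
    rw [hap, ham, smul_mul_assoc, smul_mul_assoc, mul_smul_comm, mul_smul_comm,
      smul_smul, smul_smul]
    have e1 : Real.sqrt (2 * |β j| / Real.sqrt (μ j)) *
        (Real.sign (β j) * Real.sqrt (2 * |β j| / Real.sqrt (μ j)))
        = Real.sign (β j) * (Real.sqrt (2 * |β j| / Real.sqrt (μ j)) *
          Real.sqrt (2 * |β j| / Real.sqrt (μ j))) := by ring
    have e2 : Real.sign (β j) * Real.sqrt (2 * |β j| / Real.sqrt (μ j)) *
        Real.sqrt (2 * |β j| / Real.sqrt (μ j))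
        = Real.sign (β j) * (Real.sqrt (2 * |β j| / Real.sqrt (μ j)) *
          Real.sqrt (2 * |β j| / Real.sqrt (μ j))) := by ring
    rw [e1, e2, hc]
    rw [← smul_add, smul_smul, h1]
    congr 1
    have hs : Real.sign (β j) * |β j| = β j := by
      rcases lt_or_gt_of_ne (hβ0 j) with h | h
      · rw [Real.sign_of_neg h, abs_of_neg h]; ring
      · rw [Real.sign_of_pos h, abs_of_pos h]; ring
    have hne := (hsq j).ne'
    field_simp
    nlinarith [hs, hsq j]
  have hn1 : ((n:ℝ) - 1) ≠ 0 := by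
    have : (2:ℝ) ≤ (n:ℝ) := by exact_mod_cast hn
    linarith
  have hBk : ∀ k, B - β k = Real.sqrt (μ k) := by
    intro k
    rw [hB, hβ k]
    rw [show (∑ j, β j) = ∑ j, (-Real.sqrt (μ j) + (1 / ((n : ℝ) - 1)) * ∑ k, Real.sqrt (μ k))
      from Finset.sum_congr rfl fun j _ => hβ j]
    rw [Finset.sum_add_distrib, Finset.sum_const]
    simp only [Finset.sum_neg_distrib, Finset.card_univ, Fintype.card_fin, nsmul_eq_mul]
    field_simp
    ring
  constructor
  · have hj : ∀ j : Fin n, (Real.sqrt (μ j) / 2) • (ap j * am j + am j * ap j)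
        = β j • e00 + β j • ed j := by
      intro j
      have h : (Real.sqrt (μ j) / 2) • (ap j * am j + am j * ap j)
          = (1/2 : ℝ) • (Real.sqrt (μ j) • (ap j * am j + am j * ap j)) := by
        rw [smul_smul]; ring_nf
      rw [h, key j, smul_smul, smul_add,
        show (1/2:ℝ) * (2 * β j) = β j by ring]
    rw [Finset.sum_congr rfl fun j _ => hj j, Finset.sum_add_distrib, ← Finset.sum_smul, ← hB]
  · intro k
    constructor
    · have hterm : ∀ j : Fin n,
          (Real.sqrt (μ j) • (ap j * am j + am j * ap j)) * ap k -
            ap k * (Real.sqrt (μ j) • (ap j * am j + am j * ap j))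
          = (2 * β j) • (ap k - (if j = k then ap k else 0)) := by
        intro j
        rw [key j, smul_mul_assoc, mul_smul_comm, ← smul_sub]
        congr 1
        rw [hap k, mul_smul_comm, smul_mul_assoc, ← smul_sub]
        rw [show (e00 + ed j) * eu k - eu k * (e00 + ed j)
            = (e00 * eu k - eu k * e00) + (ed j * eu k - eu k * ed j) by noncomm_ring,
          h4 k, h6 j k]
        by_cases h : j = k <;> simp [h, smul_sub]
      rw [Finset.sum_congr rfl fun j _ => hterm j]
      simp only [smul_sub, smul_ite, smul_zero, Finset.sum_sub_distrib]
      rw [Finset.sum_ite_eq' Finset.univ k (fun j => (2 * β j) • ap k)]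
      simp only [Finset.mem_univ, if_true]
      rw [← Finset.sum_smul, ← sub_smul,
        show (∑ i : Fin n, 2 * β i) = 2 * B by rw [hB, Finset.mul_sum]]
      congr 1
      linarith [hBk k]
    · have hterm : ∀ j : Fin n,
          (Real.sqrt (μ j) • (ap j * am j + am j * ap j)) * am k -
            am k * (Real.sqrt (μ j) • (ap j * am j + am j * ap j))
          = (2 * β j) • (-(am k) + (if j = k then am k else 0)) := by
        intro j
        rw [key j, smul_mul_assoc, mul_smul_comm, ← smul_sub]
        congr 1
        rw [ham k, mul_smul_comm, smul_mul_assoc, ← smul_sub]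
        rw [show (e00 + ed j) * el k - el k * (e00 + ed j)
            = (e00 * el k - el k * e00) + (ed j * el k - el k * ed j) by noncomm_ring,
          h5 k, h7 j k]
        by_cases h : j = k <;> simp [h, smul_add]
      rw [Finset.sum_congr rfl fun j _ => hterm j]
      simp only [smul_add, smul_ite, smul_zero, smul_neg, Finset.sum_add_distrib]
      rw [Finset.sum_ite_eq' Finset.univ k (fun j => (2 * β j) • am k)]
      simp only [Finset.mem_univ, if_true]
      rw [show (∑ j : Fin n, -((2 * β j) • am k)) = -((∑ j : Fin n, 2 * β j) • am k) by
        rw [Finset.sum_smul]; simp]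
      rw [← neg_smul, ← add_smul,
        show (∑ i : Fin n, 2 * β i) = 2 * B by rw [hB, Finset.mul_sum]]
      congr 1
      linarith [hBk k]
end

section
/- Let n ≥ 1 be an integer and 0 < p̃ < 1 a real number. For 0 ≤ i, j ≤ n−1 define the normalized Krawtchouk values K̃_i(j) = [ C(n−1,i)·C(n−1,j)·p̃^{i+j}·(1−p̃)^{n−i−j−1} ]^{1/2} · ∑_{k=0}^{min(i,j)} ( C(i,k)·C(j,k) / C(n−1,k) )·(−1/p̃)^k, and set E_r = √(p̃(1−p̃))·√(r(n−r)) for 0 ≤ r ≤ n and F_r = (n−1)p̃ + (1−2p̃)·r for 0 ≤ r ≤ n−1. Then for all 0 ≤ i, j ≤ n−1: −E_i·K̃_{i−1}(j) + F_i·K̃_i(j) − E_{i+1}·K̃_{i+1}(j) = j·K̃_i(j), where the terms with index i−1 = −1 and i+1 = n are absent (their coefficients E_0 and E_n vanish). Equivalently, for each j the vector (K̃_0(j),…,K̃_{n−1}(j)) is an eigenvector of the Krawtchouk matrix M_K with eigenvalue j. -/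
/-- Normalized Krawtchouk value `K̃_i(j)` for parameters `n` and `pt = p̃`. -/
noncomputable def Ktil (n : ℕ) (pt : ℝ) (i j : ℕ) : ℝ :=
  Real.sqrt ((((n - 1).choose i : ℝ)) * (((n - 1).choose j : ℝ)) * pt ^ (i + j) *
      (1 - pt) ^ ((n : ℝ) - (i : ℝ) - (j : ℝ) - 1)) *
    ∑ k ∈ Finset.range (min i j + 1),
      (((i.choose k : ℝ)) * ((j.choose k : ℝ)) / (((n - 1).choose k : ℝ))) * (-1 / pt) ^ k

/-- Off-diagonal entries `E_r = √(p̃(1-p̃))·√(r(n-r))` of the Krawtchouk matrix. -/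
noncomputable def Ekr (n : ℕ) (pt : ℝ) (r : ℕ) : ℝ :=
  Real.sqrt (pt * (1 - pt)) * Real.sqrt ((r : ℝ) * ((n : ℝ) - (r : ℝ)))

/-- Diagonal entries `F_r = (n-1)p̃ + (1-2p̃)r` of the Krawtchouk matrix. -/
noncomputable def Fkr (n : ℕ) (pt : ℝ) (r : ℕ) : ℝ :=
  ((n : ℝ) - 1) * pt + (1 - 2 * pt) * (r : ℝ)


lemma R1 (m k : ℕ) : ((k:ℝ)+1) * (m.choose (k+1)) = ((m:ℝ) - k) * (m.choose k) := by
  rcases lt_or_ge k m with h | h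
  · have h2 := Nat.choose_succ_right_eq m k
    have hc : ((m - k : ℕ) : ℝ) = (m:ℝ) - k := by
      push_cast [Nat.cast_sub h.le]; ring
    have := congrArg (fun t : ℕ => (t : ℝ)) h2
    push_cast at this
    rw [hc] at this
    linarith
  · rcases eq_or_lt_of_le h with h' | h'
    · subst h'
      simp [Nat.choose_succ_self]
    · simp [Nat.choose_eq_zero_of_lt h', Nat.choose_eq_zero_of_lt (Nat.lt_succ_of_lt h')]

lemma R2 (i k : ℕ) : (i:ℝ) * ((i-1).choose (k+1)) = ((i:ℝ) - ((k:ℝ)+1)) * (i.choose (k+1)) := by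
  cases i with
  | zero => simp [Nat.choose_eq_zero_of_lt (Nat.succ_pos k)]
  | succ i' =>
    have h2 := Nat.add_one_mul_choose_eq i' (k+1)
    have := congrArg (fun t : ℕ => (t : ℝ)) h2
    push_cast at this
    have h3 := R1 (i'+1) (k+1)
    push_cast at h3 ⊢

    linarith

lemma R4 (i k : ℕ) : (i:ℝ) * (i.choose k) - (i:ℝ) * ((i-1).choose k) = (k:ℝ) * (i.choose k) := by
  cases i with
  | zero =>
    cases k with
    | zero => simp
    | succ k' => simp [Nat.choose_eq_zero_of_lt (Nat.succ_pos k')]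
  | succ i' =>
    cases k with
    | zero => simp
    | succ k' =>
      have hp := Nat.choose_succ_succ i' k'
      have h2 := Nat.add_one_mul_choose_eq i' k'
      have hpc := congrArg (fun t : ℕ => (t : ℝ)) hp
      have h2c := congrArg (fun t : ℕ => (t : ℝ)) h2
      simp only [Nat.succ_eq_add_one] at hpc h2c
      push_cast at hpc h2c ⊢

      linear_combination ((i':ℝ)+1) * hpc + h2c


noncomputable def Sf (N j : ℕ) (p : ℝ) (m k : ℕ) : ℝ :=
  ((m.choose k : ℝ) * (j.choose k : ℝ) / ((N.choose k : ℝ))) * (-1/p)^k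

noncomputable def Uf (N i j : ℕ) (p : ℝ) (k : ℕ) : ℝ :=
  ((k:ℝ) - j) * (i.choose k) * ((j.choose k : ℝ)/(N.choose k)) * (-1/p)^k

noncomputable def Vf (N i j : ℕ) (p : ℝ) (k : ℕ) : ℝ :=
  p * ((i:ℝ)*((i-1).choose k) + ((N:ℝ)-2*i)*(i.choose k) - ((N:ℝ)-i)*((i+1).choose k))
    * ((j.choose k : ℝ)/(N.choose k)) * (-1/p)^k

lemma VU (N i j k : ℕ) (p : ℝ) (h0 : 0 < p) (hj : j ≤ N) :
    Vf N i j p (k+1) = - Uf N i j p k := by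
  have hp : p ≠ 0 := ne_of_gt h0
  have hP : ((i+1).choose (k+1) : ℝ) = (i.choose k) + (i.choose (k+1)) := by
    exact_mod_cast congrArg (fun t : ℕ => (t:ℝ)) (Nat.choose_succ_succ i k)
  have hT : (i:ℝ)*((i-1).choose (k+1)) + ((N:ℝ)-2*i)*(i.choose (k+1))
      - ((N:ℝ)-i)*((i+1).choose (k+1))
      = -((k:ℝ)+1)*(i.choose (k+1)) - ((N:ℝ)-i)*(i.choose k) := by
    linear_combination R2 i k - ((N:ℝ)-i) * hP
  have hstep : (-((k:ℝ)+1)*(i.choose (k+1)) - ((N:ℝ)-i)*(i.choose k))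
      * ((j.choose (k+1) : ℝ)/(N.choose (k+1)))
      = ((k:ℝ) - j) * (i.choose k) * ((j.choose k : ℝ)/(N.choose k)) := by
    rcases le_or_gt j k with h | h
    · have hj1 : (j.choose (k+1) : ℝ) = 0 := by
        exact_mod_cast congrArg (fun t : ℕ => (t:ℝ)) (Nat.choose_eq_zero_of_lt (by omega))
      rcases eq_or_lt_of_le h with h' | h'
      · subst h'; simp [hj1]
      · have hj0 : (j.choose k : ℝ) = 0 := by
          exact_mod_cast congrArg (fun t : ℕ => (t:ℝ)) (Nat.choose_eq_zero_of_lt h')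
        simp [hj1, hj0]
    · have hkN : k < N := by omega
      have hCN : (0:ℝ) < (N.choose k : ℝ) := by
        exact_mod_cast Nat.choose_pos (by omega : k ≤ N)
      have hCN' : (0:ℝ) < (N.choose (k+1) : ℝ) := by
        exact_mod_cast Nat.choose_pos (by omega : k+1 ≤ N)
      have hk1 : ((k:ℝ)+1) ≠ 0 := by positivity
      have e1 : (j.choose (k+1) : ℝ) = ((j:ℝ)-k) * (j.choose k) / ((k:ℝ)+1) := by
        field_simp; linarith [R1 j k]
      have e2 : (N.choose (k+1) : ℝ) = ((N:ℝ)-k) * (N.choose k) / ((k:ℝ)+1) := by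
        field_simp; linarith [R1 N k]
      have e3 : (i.choose (k+1) : ℝ) = ((i:ℝ)-k) * (i.choose k) / ((k:ℝ)+1) := by
        field_simp; linarith [R1 i k]
      have hNk : ((N:ℝ)-k) ≠ 0 := by
        have : (k:ℝ) < N := by exact_mod_cast hkN
        linarith
      rw [e1, e2, e3]
      field_simp
      ring
  simp only [Uf, Vf, pow_succ]
  calc p * ((i:ℝ)*((i-1).choose (k+1)) + ((N:ℝ)-2*i)*(i.choose (k+1))
        - ((N:ℝ)-i)*((i+1).choose (k+1)))
      * ((j.choose (k+1) : ℝ)/(N.choose (k+1))) * ((-1/p)^k * (-1/p))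
      = -((-((k:ℝ)+1)*(i.choose (k+1)) - ((N:ℝ)-i)*(i.choose k))
        * ((j.choose (k+1) : ℝ)/(N.choose (k+1)))) * (-1/p)^k := by
        have hpp : p * (-1/p) = -1 := by field_simp
        rw [hT]
        linear_combination ((-((k:ℝ)+1)*(i.choose (k+1)) - ((N:ℝ)-i)*(i.choose k))
          * ((j.choose (k+1) : ℝ)/(N.choose (k+1))) * (-1/p)^k) * hpp
    _ = -(((k:ℝ) - j) * (i.choose k) * ((j.choose k : ℝ)/(N.choose k)) * (-1/p)^k) := by
        rw [hstep]; ring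

lemma mainlem (N j : ℕ) (p : ℝ) (h0 : 0 < p) (i : ℕ) (hi : i ≤ N) (hj : j ≤ N) :
    -(i:ℝ)*(1-p) * (∑ k ∈ Finset.range (min (i-1) j + 1), Sf N j p (i-1) k)
    + ((N:ℝ)*p + (1-2*p)*(i:ℝ)) * (∑ k ∈ Finset.range (min i j + 1), Sf N j p i k)
    - ((N:ℝ)-(i:ℝ))*p * (∑ k ∈ Finset.range (min (i+1) j + 1), Sf N j p (i+1) k)
    = (j:ℝ) * ∑ k ∈ Finset.range (min i j + 1), Sf N j p i k := by
  have hext : ∀ m : ℕ, ∑ k ∈ Finset.range (min m j + 1), Sf N j p m k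
      = ∑ k ∈ Finset.range (N+2), Sf N j p m k := by
    intro m
    apply Finset.sum_subset
    · intro k hk
      simp only [Finset.mem_range] at *
      omega
    · intro k _ hk
      simp only [Finset.mem_range, not_lt] at hk
      have h2 : m < k ∨ j < k := by omega
      rcases h2 with h | h
      · simp [Sf, Nat.choose_eq_zero_of_lt h]
      · simp [Sf, Nat.choose_eq_zero_of_lt h]
  rw [hext (i-1), hext i, hext (i+1)]
  have hUV : ∀ k ∈ Finset.range (N+2),
      (-(i:ℝ)*(1-p)) * Sf N j p (i-1) k + ((N:ℝ)*p + (1-2*p)*(i:ℝ)) * Sf N j p i k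
        - ((N:ℝ)-(i:ℝ))*p * Sf N j p (i+1) k - (j:ℝ) * Sf N j p i k
      = Uf N i j p k + Vf N i j p k := by
    intro k _
    simp only [Sf, Uf, Vf]
    linear_combination (((j.choose k : ℝ)) / ((N.choose k : ℝ)) * (-1/p)^k) * R4 i k
  have hsum0 : ∑ k ∈ Finset.range (N+2), (Uf N i j p k + Vf N i j p k) = 0 := by
    rw [Finset.sum_add_distrib]
    have h1 : ∑ k ∈ Finset.range (N+2), Uf N i j p k
        = ∑ k ∈ Finset.range (N+1), Uf N i j p k := by
      rw [Finset.sum_range_succ]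
      have hz : (i.choose (N+1) : ℝ) = 0 := by
        exact_mod_cast congrArg (fun t : ℕ => (t:ℝ)) (Nat.choose_eq_zero_of_lt (by omega))
      simp [Uf, hz]
    have h2 : ∑ k ∈ Finset.range (N+2), Vf N i j p k
        = (∑ k ∈ Finset.range (N+1), Vf N i j p (k+1)) + Vf N i j p 0 :=
      Finset.sum_range_succ' _ _
    have h3 : Vf N i j p 0 = 0 := by
      simp only [Vf, Nat.choose_zero_right, Nat.cast_one, pow_zero]
      ring
    have h4 : ∀ k ∈ Finset.range (N+1), Vf N i j p (k+1) = - Uf N i j p k :=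
      fun k _ => VU N i j k p h0 hj
    rw [h1, h2, h3, Finset.sum_congr rfl h4]
    simp
  have key : ∑ k ∈ Finset.range (N+2),
      ((-(i:ℝ)*(1-p)) * Sf N j p (i-1) k + ((N:ℝ)*p + (1-2*p)*(i:ℝ)) * Sf N j p i k
        - ((N:ℝ)-(i:ℝ))*p * Sf N j p (i+1) k - (j:ℝ) * Sf N j p i k) = 0 := by
    rw [Finset.sum_congr rfl hUV]
    exact hsum0
  simp only [Finset.sum_sub_distrib, Finset.sum_add_distrib, ← Finset.mul_sum] at key
  linarith

lemma claim1 (n i j : ℕ) (p : ℝ) (h0 : 0 < p) (h1 : p < 1) (hn : 1 ≤ n)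
    (hi1 : 1 ≤ i) (hi : i ≤ n - 1) :
    Ekr n p i * Real.sqrt ((((n-1).choose (i-1) : ℝ)) * (((n-1).choose j : ℝ))
        * p^((i-1)+j) * (1-p)^((n:ℝ) - ((i-1 : ℕ):ℝ) - (j:ℝ) - 1))
    = (i:ℝ) * (1-p) * Real.sqrt ((((n-1).choose i : ℝ)) * (((n-1).choose j : ℝ))
        * p^(i+j) * (1-p)^((n:ℝ) - (i:ℝ) - (j:ℝ) - 1)) := by
  have hq : 0 < 1 - p := by linarith
  have hin : (i:ℝ) < (n:ℝ) := by exact_mod_cast (by omega : i < n)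
  have hni : (0:ℝ) ≤ (n:ℝ) - i := by linarith
  set A1 : ℝ := (((n-1).choose (i-1) : ℝ)) * (((n-1).choose j : ℝ))
      * p^((i-1)+j) * (1-p)^((n:ℝ) - ((i-1 : ℕ):ℝ) - (j:ℝ) - 1) with hA1def
  set A2 : ℝ := (((n-1).choose i : ℝ)) * (((n-1).choose j : ℝ))
      * p^(i+j) * (1-p)^((n:ℝ) - (i:ℝ) - (j:ℝ) - 1) with hA2def
  have e1 : Real.sqrt (p*(1-p)) * Real.sqrt ((i:ℝ)*((n:ℝ)-i)) * Real.sqrt A1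
      = Real.sqrt (p*(1-p) * ((i:ℝ)*((n:ℝ)-i)) * A1) := by
    rw [← Real.sqrt_mul (by positivity), ← Real.sqrt_mul (by positivity)]
  have hc : ((i-1 : ℕ):ℝ) = (i:ℝ) - 1 := by
    rw [Nat.cast_sub hi1]; norm_num
  have hnat : ((n-1).choose i : ℝ) * (i:ℝ) = ((n-1).choose (i-1) : ℝ) * ((n:ℝ) - i) := by
    have h := Nat.choose_succ_right_eq (n-1) (i-1)
    rw [(by omega : (i-1)+1 = i), (by omega : (n-1) - (i-1) = n - i)] at h
    have hcast := congrArg (fun t : ℕ => (t:ℝ)) h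
    push_cast [Nat.cast_sub (by omega : i ≤ n)] at hcast
    linarith
  have harg : p*(1-p) * ((i:ℝ)*((n:ℝ)-i)) * A1 = ((i:ℝ)*(1-p))^2 * A2 := by
    rw [hA1def, hA2def, hc,
      (by ring : (n:ℝ) - ((i:ℝ)-1) - (j:ℝ) - 1 = ((n:ℝ) - (i:ℝ) - (j:ℝ) - 1) + 1),
      Real.rpow_add hq, Real.rpow_one,
      (by omega : i + j = ((i-1)+j) + 1), pow_succ]
    linear_combination (-((1-p)^2 * p * (p^((i-1)+j))
      * ((1-p)^((n:ℝ) - (i:ℝ) - (j:ℝ) - 1)) * (((n-1).choose j : ℝ)) * (i:ℝ))) * hnat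
  rw [Ekr, e1, harg, Real.sqrt_mul (sq_nonneg _), Real.sqrt_sq (by positivity : (0:ℝ) ≤ (i:ℝ)*(1-p))]

lemma claim3 (n i j : ℕ) (p : ℝ) (h0 : 0 < p) (h1 : p < 1) (hn : 1 ≤ n)
    (hi2 : i + 1 ≤ n - 1) :
    Ekr n p (i+1) * Real.sqrt ((((n-1).choose (i+1) : ℝ)) * (((n-1).choose j : ℝ))
        * p^((i+1)+j) * (1-p)^((n:ℝ) - ((i+1 : ℕ):ℝ) - (j:ℝ) - 1))
    = ((n:ℝ) - 1 - (i:ℝ)) * p * Real.sqrt ((((n-1).choose i : ℝ)) * (((n-1).choose j : ℝ))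
        * p^(i+j) * (1-p)^((n:ℝ) - (i:ℝ) - (j:ℝ) - 1)) := by
  have hq : 0 < 1 - p := by linarith
  have hin : ((i:ℝ)+1) < (n:ℝ) := by exact_mod_cast (by omega : i + 1 < n)
  set A1 : ℝ := (((n-1).choose (i+1) : ℝ)) * (((n-1).choose j : ℝ))
      * p^((i+1)+j) * (1-p)^((n:ℝ) - ((i+1 : ℕ):ℝ) - (j:ℝ) - 1) with hA1def
  set A2 : ℝ := (((n-1).choose i : ℝ)) * (((n-1).choose j : ℝ))
      * p^(i+j) * (1-p)^((n:ℝ) - (i:ℝ) - (j:ℝ) - 1) with hA2def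
  have e1 : Real.sqrt (p*(1-p)) * Real.sqrt (((i+1 : ℕ):ℝ)*((n:ℝ)-((i+1 : ℕ):ℝ))) * Real.sqrt A1
      = Real.sqrt (p*(1-p) * (((i+1 : ℕ):ℝ)*((n:ℝ)-((i+1:ℕ):ℝ))) * A1) := by
    rw [← Real.sqrt_mul (by positivity), ← Real.sqrt_mul (by push_cast; exact mul_nonneg (mul_pos h0 hq).le (mul_nonneg (by positivity) (by linarith)))]
  have hnat : ((n-1).choose (i+1) : ℝ) * ((i:ℝ)+1) = ((n-1).choose i : ℝ) * ((n:ℝ) - 1 - i) := by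
    have h := Nat.choose_succ_right_eq (n-1) i
    have hcast := congrArg (fun t : ℕ => (t:ℝ)) h
    push_cast [Nat.cast_sub (by omega : i ≤ n - 1), Nat.cast_sub (by omega : 1 ≤ n)] at hcast
    linarith
  have harg : p*(1-p) * (((i+1:ℕ):ℝ)*((n:ℝ)-((i+1:ℕ):ℝ))) * A1 = (((n:ℝ)-1-(i:ℝ))*p)^2 * A2 := by
    rw [hA1def, hA2def,
      (by push_cast; ring : (n:ℝ) - (i:ℝ) - (j:ℝ) - 1 = ((n:ℝ) - ((i+1:ℕ):ℝ) - (j:ℝ) - 1) + 1),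
      Real.rpow_add hq, Real.rpow_one,
      (by omega : (i+1) + j = (i+j) + 1), pow_succ]
    push_cast
    linear_combination (p^2 * (1-p) * (p^(i+j))
      * ((1-p)^((n:ℝ) - ((i:ℝ)+1) - (j:ℝ) - 1)) * (((n-1).choose j : ℝ)) * ((n:ℝ)-1-(i:ℝ))) * hnat
  rw [Ekr, e1, harg, Real.sqrt_mul (sq_nonneg _),
    Real.sqrt_sq (by nlinarith : (0:ℝ) ≤ ((n:ℝ)-1-(i:ℝ))*p)]

theorem krawtchouk_eigenvector (n : ℕ) (hn : 1 ≤ n) (pt : ℝ) (h0 : 0 < pt) (h1 : pt < 1) :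
    ∀ i j : ℕ, i ≤ n - 1 → j ≤ n - 1 →
      -Ekr n pt i * Ktil n pt (i - 1) j + Fkr n pt i * Ktil n pt i j -
          Ekr n pt (i + 1) * Ktil n pt (i + 1) j =
        (j : ℝ) * Ktil n pt i j := by
  intro i j hi hj
  have hq : 0 < 1 - pt := by linarith
  have hm := mainlem (n-1) j pt h0 i hi hj
  simp only [Sf] at hm
  have hNc : ((n-1 : ℕ):ℝ) = (n:ℝ) - 1 := by rw [Nat.cast_sub hn]; norm_num
  rw [hNc] at hm
  have T1 : Ekr n pt i * Ktil n pt (i-1) j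
      = (i:ℝ)*(1-pt) * (Real.sqrt ((((n-1).choose i : ℝ)) * (((n-1).choose j : ℝ))
          * pt^(i+j) * (1-pt)^((n:ℝ)-(i:ℝ)-(j:ℝ)-1))
        * ∑ k ∈ Finset.range (min (i-1) j + 1),
            ((((i-1).choose k : ℝ)) * ((j.choose k : ℝ)) / (((n-1).choose k : ℝ))) * (-1/pt)^k) := by
    rcases Nat.eq_zero_or_pos i with h | h
    · subst h
      simp [Ekr]
    · simp only [Ktil]
      rw [← mul_assoc, claim1 n i j pt h0 h1 hn h hi]
      ring
  have T3 : Ekr n pt (i+1) * Ktil n pt (i+1) j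
      = ((n:ℝ)-1-(i:ℝ))*pt * (Real.sqrt ((((n-1).choose i : ℝ)) * (((n-1).choose j : ℝ))
          * pt^(i+j) * (1-pt)^((n:ℝ)-(i:ℝ)-(j:ℝ)-1))
        * ∑ k ∈ Finset.range (min (i+1) j + 1),
            ((((i+1).choose k : ℝ)) * ((j.choose k : ℝ)) / (((n-1).choose k : ℝ))) * (-1/pt)^k) := by
    rcases eq_or_lt_of_le hi with h | h
    · have h2 : Ekr n pt (i+1) = 0 := by
        simp only [Ekr]
        rw [show i+1 = n by omega]
        simp
      have h3 : ((n:ℝ)-1-(i:ℝ)) = 0 := by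
        rw [h, hNc]; ring
      rw [h2, h3]
      ring
    · simp only [Ktil]
      rw [← mul_assoc, claim3 n i j pt h0 h1 hn (by omega)]
      ring
  rw [neg_mul, T1, T3]
  simp only [Fkr, Ktil]
  linear_combination Real.sqrt ((((n-1).choose i : ℝ)) * (((n-1).choose j : ℝ))
      * pt^(i+j) * (1-pt)^((n:ℝ)-(i:ℝ)-(j:ℝ)-1)) * hm
end
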